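/- Let g₁,…,g_m ∈ ℝ[u₁,…,u_k] admit an algebraic certificate of compactness, and let D = {u ∈ ℝᵏ : gᵢ(u) ≥ 0 for all i}. If f ∈ ℝ[u₁,…,u_k] satisfies f(u) > 0 for every u ∈ D, then there exist SOS polynomials s₀, s₁, …, s_m ∈ ℝ[u₁,…,u_k] such that f = s₀ + Σᵢ₌₁^m sᵢ gᵢ. -/

import Mathlib

/-!
Let `M` be the quadratic module generated by the `gᵢ`. The certificate makes `M` archimedean,
because the elements `a` with `N - a² ∈ M` for some real `N` form a subalgebra containing the
variables. Jacobi's representation theorem then puts into `M` every element that is positive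
under every `ℝ`-algebra homomorphism nonnegative on `M`; for polynomials these homomorphisms are
the evaluations at points of `D`.

For Jacobi's theorem, a proper archimedean quadratic module `Q` that is maximal satisfies
`Q ∪ -Q = A` and contains `w` as soon as it contains every `w + δ`, `δ > 0`; hence every element
is congruent to a real number modulo the ideal `Q ∩ -Q`, which yields a homomorphism `A → ℝ`
nonnegative on `Q`. So if `a` is positive at all these homomorphisms, `M - ΣA² a` is improper:
`σ a = 1 + q` with `σ` a sum of squares and `q ∈ M`. This bounds `a` below by some `ε > 0` at the
homomorphisms; the same identity for `a - ε`, together with a geometric series in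
`u = 1 - σ / B`, puts `a` into `M`.
-/

open MvPolynomial

def IsSOS {k : ℕ} (s : MvPolynomial (Fin k) ℝ) : Prop :=
  ∃ (r : ℕ) (p : Fin r → MvPolynomial (Fin k) ℝ), s = ∑ i, p i ^ 2

open scoped algebraMap

structure IsQuadraticModule {A : Type*} [CommRing A] (M : Set A) : Prop where
  one_mem : 1 ∈ M
  add_mem {a b : A} : a ∈ M → b ∈ M → a + b ∈ M
  mul_self_mul_mem (a : A) {b : A} : b ∈ M → a * a * b ∈ M

namespace QuadraticModule

variable {A : Type*} [CommRing A]

def adjoin (M : Set A) (w : A) : Set A :=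
  {a | ∃ q ∈ M, ∃ σ, IsSumSq σ ∧ a = q + σ * w}

def generatedBy {ι : Type*} [Fintype ι] (g : ι → A) : Set A :=
  {a | ∃ (s₀ : A) (s : ι → A), IsSumSq s₀ ∧ (∀ i, IsSumSq (s i)) ∧ a = s₀ + ∑ i, s i * g i}

def IsArchimedean [Algebra ℝ A] (M : Set A) : Prop :=
  ∀ a : A, ∃ c : ℝ, (c : A) - a ∈ M

theorem subset_adjoin {M : Set A} (w : A) : M ⊆ adjoin M w :=
  fun a ha => ⟨a, ha, 0, .zero, by simp⟩

theorem isQuadraticModule_generatedBy {ι : Type*} [Fintype ι] (g : ι → A) :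
    IsQuadraticModule (generatedBy g) where
  one_mem := ⟨1, 0, .one, fun _ => .zero, by simp⟩
  add_mem := by
    rintro _ _ ⟨s₀, s, hs₀, hs, rfl⟩ ⟨t₀, t, ht₀, ht, rfl⟩
    refine ⟨s₀ + t₀, s + t, hs₀.add ht₀, fun i => (hs i).add (ht i), ?_⟩
    simp only [Pi.add_apply, add_mul, Finset.sum_add_distrib]
    ring
  mul_self_mul_mem a := by
    rintro _ ⟨s₀, s, hs₀, hs, rfl⟩
    refine ⟨a * a * s₀, fun i => a * a * s i, (IsSumSq.mul_self a).mul hs₀,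
      fun i => (IsSumSq.mul_self a).mul (hs i), ?_⟩
    simp only [mul_add, Finset.mul_sum, mul_assoc]

theorem mem_generatedBy {ι : Type*} [Fintype ι] [DecidableEq ι]
    (g : ι → A) (i : ι) : g i ∈ generatedBy g :=
  ⟨0, Pi.single i 1, .zero, fun j => by by_cases h : j = i <;> simp [h, IsSumSq.one],
    by simp [Pi.single_apply]⟩

theorem IsArchimedean.mono [Algebra ℝ A] {M M' : Set A} (h : IsArchimedean M) (hMM' : M ⊆ M') :
    IsArchimedean M' :=
  fun a => (h a).imp fun _ hc => hMM' hc

end QuadraticModule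

namespace IsQuadraticModule

open QuadraticModule

variable {A : Type*} [CommRing A] {M : Set A}

theorem zero_mem (hM : IsQuadraticModule M) : (0 : A) ∈ M := by
  simpa using hM.mul_self_mul_mem 0 hM.one_mem

theorem isSumSq_mul_mem (hM : IsQuadraticModule M) {s a : A} (hs : IsSumSq s) (ha : a ∈ M) :
    s * a ∈ M := by
  induction hs with
  | zero => simpa using hM.zero_mem
  | sq_add b _ ih => rw [add_mul]; exact hM.add_mem (hM.mul_self_mul_mem b ha) ih

theorem isSumSq_mem (hM : IsQuadraticModule M) {s : A} (hs : IsSumSq s) : s ∈ M := by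
  simpa using hM.isSumSq_mul_mem hs hM.one_mem

theorem sum_mem (hM : IsQuadraticModule M) {ι : Type*} (t : Finset ι) {f : ι → A}
    (h : ∀ i ∈ t, f i ∈ M) : ∑ i ∈ t, f i ∈ M :=
  Finset.sum_induction f (· ∈ M) (fun _ _ => hM.add_mem) hM.zero_mem h

theorem adjoin (hM : IsQuadraticModule M) (w : A) : IsQuadraticModule (adjoin M w) where
  one_mem := ⟨1, hM.one_mem, 0, .zero, by simp⟩
  add_mem := by
    rintro _ _ ⟨q, hq, σ, hσ, rfl⟩ ⟨q', hq', σ', hσ', rfl⟩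
    exact ⟨q + q', hM.add_mem hq hq', σ + σ', hσ.add hσ', by ring⟩
  mul_self_mul_mem a := by
    rintro _ ⟨q, hq, σ, hσ, rfl⟩
    exact ⟨a * a * q, hM.mul_self_mul_mem a hq, a * a * σ, (IsSumSq.mul_self a).mul hσ, by ring⟩

theorem mem_adjoin (hM : IsQuadraticModule M) (w : A) : w ∈ QuadraticModule.adjoin M w :=
  ⟨0, hM.zero_mem, 1, .one, by simp⟩

theorem sUnion {c : Set (Set A)} (hc : ∀ Q ∈ c, IsQuadraticModule Q)
    (hchain : IsChain (· ⊆ ·) c) (hne : c.Nonempty) : IsQuadraticModule (⋃₀ c) where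
  one_mem := hne.elim fun Q hQ => ⟨Q, hQ, (hc Q hQ).one_mem⟩
  add_mem := by
    rintro a b ⟨Q, hQ, ha⟩ ⟨Q', hQ', hb⟩
    rcases hchain.total hQ hQ' with h | h
    · exact ⟨Q', hQ', (hc Q' hQ').add_mem (h ha) hb⟩
    · exact ⟨Q, hQ, (hc Q hQ).add_mem ha (h hb)⟩
  mul_self_mul_mem a := by
    rintro b ⟨Q, hQ, hb⟩
    exact ⟨Q, hQ, (hc Q hQ).mul_self_mul_mem a hb⟩

theorem exists_maximal (hM : IsQuadraticModule M) (hM₁ : -1 ∉ M) :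
    ∃ Q, M ⊆ Q ∧ IsQuadraticModule Q ∧ -1 ∉ Q ∧ ∀ w ∉ Q, -1 ∈ QuadraticModule.adjoin Q w := by
  obtain ⟨Q, hMQ, ⟨hQ, hQ₁⟩, hmax⟩ := zorn_subset_nonempty
    {Q : Set A | IsQuadraticModule Q ∧ -1 ∉ Q}
    (fun c hc hchain hne => ⟨⋃₀ c, ⟨sUnion (fun Q hQ => (hc hQ).1) hchain hne,
      fun ⟨Q, hQ, h⟩ => (hc hQ).2 h⟩, fun _ => Set.subset_sUnion_of_mem⟩) M ⟨hM, hM₁⟩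
  refine ⟨Q, hMQ, hQ, hQ₁, fun w hw => ?_⟩
  by_contra h
  exact hw (hmax ⟨hQ.adjoin w, h⟩ (subset_adjoin w) (hQ.mem_adjoin w))

section Algebra

variable [Algebra ℝ A]

theorem coe_mem (hM : IsQuadraticModule M) {c : ℝ} (hc : 0 ≤ c) : (c : A) ∈ M := by
  refine hM.isSumSq_mem (IsSquare.isSumSq ⟨(√c : ℝ), ?_⟩)
  rw [← algebraMap.coe_mul, Real.mul_self_sqrt hc]

theorem coe_mul_mem (hM : IsQuadraticModule M) {c : ℝ} (hc : 0 ≤ c) {a : A} (ha : a ∈ M) :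
    (c : A) * a ∈ M := by
  simpa only [← algebraMap.coe_mul, Real.mul_self_sqrt hc] using hM.mul_self_mul_mem (√c : ℝ) ha

theorem add_coe_mem_of_le (hM : IsQuadraticModule M) {a : A} {c d : ℝ} (ha : a + (c : A) ∈ M)
    (hcd : c ≤ d) : a + (d : A) ∈ M := by
  convert hM.add_mem ha (hM.coe_mem (sub_nonneg.2 hcd)) using 1
  push_cast; ring

theorem coe_sub_mem_of_le (hM : IsQuadraticModule M) {a : A} {c d : ℝ} (ha : (c : A) - a ∈ M)
    (hcd : c ≤ d) : (d : A) - a ∈ M := by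
  convert hM.add_mem ha (hM.coe_mem (sub_nonneg.2 hcd)) using 1
  push_cast; ring

theorem nonneg_of_coe_mem (hM : IsQuadraticModule M) (hM₁ : -1 ∉ M) {c : ℝ} (hc : (c : A) ∈ M) :
    0 ≤ c := by
  by_contra! h
  refine hM₁ ?_
  convert hM.coe_mul_mem (inv_nonneg.2 (neg_nonneg.2 h.le)) hc using 1
  rw [← algebraMap.coe_mul, inv_neg, neg_mul, inv_mul_cancel₀ h.ne]
  push_cast; rfl

theorem mul_mem_of_mem_of_neg_mem (hM : IsQuadraticModule M) (a : A) {x : A} (hx : x ∈ M)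
    (hnx : -x ∈ M) : a * x ∈ M := by
  have h := hM.add_mem (hM.mul_self_mul_mem ((2⁻¹ : ℝ) * (a + 1)) hx)
    (hM.mul_self_mul_mem ((2⁻¹ : ℝ) * (a - 1)) hnx)
  have h4 : ((2⁻¹ : ℝ) : A) * (2⁻¹ : ℝ) * 4 = 1 := by
    rw [← algebraMap.coe_mul, ← map_ofNat (algebraMap ℝ A) 4, ← algebraMap.coe_mul]; norm_num
  convert h using 1
  linear_combination (-(a * x)) * h4

def support (hM : IsQuadraticModule M) : Ideal A where
  carrier := {x | x ∈ M ∧ -x ∈ M}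
  add_mem' ha hb := ⟨hM.add_mem ha.1 hb.1, by simpa [add_comm] using hM.add_mem ha.2 hb.2⟩
  zero_mem' := ⟨hM.zero_mem, by simpa using hM.zero_mem⟩
  smul_mem' a x hx := ⟨hM.mul_mem_of_mem_of_neg_mem a hx.1 hx.2,
    by simpa using hM.mul_mem_of_mem_of_neg_mem (-a) hx.1 hx.2⟩

def boundedSubalgebra (hM : IsQuadraticModule M) : Subalgebra ℝ A where
  carrier := {a | ∃ N : ℝ, (N : A) - a * a ∈ M}
  add_mem' := by
    rintro a b ⟨N, ha⟩ ⟨N', hb⟩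
    refine ⟨N + N + N' + N', ?_⟩
    convert hM.add_mem (hM.add_mem (hM.add_mem ha ha) (hM.add_mem hb hb))
      (hM.mul_self_mul_mem (a - b) hM.one_mem) using 1
    push_cast; ring
  mul_mem' := by
    rintro a b ⟨N, ha⟩ ⟨N', hb⟩
    refine ⟨N * |N'|, ?_⟩
    convert hM.add_mem (hM.coe_mul_mem (abs_nonneg N') ha)
      (hM.mul_self_mul_mem a (hM.coe_sub_mem_of_le hb (le_abs_self N'))) using 1
    push_cast; ring
  algebraMap_mem' c := ⟨c * c, by simpa using hM.zero_mem⟩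

theorem isArchimedean_of_boundedSubalgebra_eq_top (hM : IsQuadraticModule M)
    (h : hM.boundedSubalgebra = ⊤) : IsArchimedean M := by
  intro a
  obtain ⟨N, ha⟩ : a ∈ hM.boundedSubalgebra := h ▸ Algebra.mem_top
  refine ⟨2⁻¹ * (N + 1), ?_⟩
  have h2 : ((2⁻¹ : ℝ) : A) * 2 = 1 := by
    rw [← map_ofNat (algebraMap ℝ A) 2, ← algebraMap.coe_mul]; norm_num
  convert hM.coe_mul_mem (c := 2⁻¹) (by norm_num)
    (hM.add_mem ha (hM.mul_self_mul_mem (a - 1) hM.one_mem)) using 1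
  push_cast
  linear_combination a * h2

theorem isArchimedean_of_coe_sub_sum_mul_self_mem (hM : IsQuadraticModule M) {ι : Type*}
    [Fintype ι] {x : ι → A} (hx : Algebra.adjoin ℝ (Set.range x) = ⊤) {N : ℝ}
    (hN : (N : A) - ∑ j, x j * x j ∈ M) : IsArchimedean M := by
  classical
  refine hM.isArchimedean_of_boundedSubalgebra_eq_top (eq_top_iff.2 (hx ▸ Algebra.adjoin_le ?_))
  rintro _ ⟨j, rfl⟩
  refine ⟨N, ?_⟩
  convert hM.add_mem hN (hM.sum_mem (Finset.univ.erase j)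
    fun i _ => hM.mul_self_mul_mem (x i) hM.one_mem) using 1
  rw [← Finset.add_sum_erase _ _ (Finset.mem_univ j)]
  simp only [mul_one]; ring

theorem exists_le_coe_sub_mem (hM : IsQuadraticModule M) (harch : IsArchimedean M)
    (a : A) (r : ℝ) : ∃ c, r ≤ c ∧ (c : A) - a ∈ M :=
  (harch a).elim fun c hc => ⟨max c r, le_max_right c r, hM.coe_sub_mem_of_le hc (le_max_left c r)⟩

theorem neg_one_mem_of_neg_one_mem_adjoin (hM : IsQuadraticModule M) {t : A}
    (h₁ : -1 ∈ QuadraticModule.adjoin M t) (h₂ : -1 ∈ QuadraticModule.adjoin M (-t)) :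
    -1 ∈ M := by
  obtain ⟨q₁, hq₁, σ₁, hσ₁, e₁⟩ := h₁
  obtain ⟨q₂, hq₂, σ₂, hσ₂, e₂⟩ := h₂
  have hneg : -(σ₁ + σ₂) ∈ M := by
    convert hM.add_mem (hM.isSumSq_mul_mem hσ₂ hq₁) (hM.isSumSq_mul_mem hσ₁ hq₂) using 1
    linear_combination σ₂ * e₁ + σ₁ * e₂
  have hσ₁σ₁ : σ₁ * σ₁ ∈ hM.support :=
    ⟨hM.isSumSq_mem (.mul_self σ₁), by
      convert hM.add_mem (hM.isSumSq_mul_mem hσ₁ hneg) (hM.isSumSq_mem (hσ₁.mul hσ₂)) using 1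
      ring⟩
  -- `σ₁ t = -(1 + q₁)`, so `(1 + q₁)²` lies in the support ideal together with `σ₁²`
  have hsq : (1 + q₁) * (1 + q₁) ∈ hM.support := by
    convert hM.support.mul_mem_left (t * t) hσ₁σ₁ using 1
    linear_combination (σ₁ * t - 1 - q₁) * e₁
  convert hM.add_mem hsq.2 (hM.add_mem (hM.add_mem hq₁ hq₁) (hM.mul_self_mul_mem q₁ hM.one_mem))
    using 1
  ring

theorem neg_one_notMem_adjoin (hM : IsQuadraticModule M) (harch : IsArchimedean M)
    (hM₁ : -1 ∉ M) {w : A} (hw : ∀ δ : ℝ, 0 < δ → w + (δ : A) ∈ M) :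
    -1 ∉ QuadraticModule.adjoin M w := by
  rintro ⟨q, hq, σ, hσ, e⟩
  obtain ⟨N, hN, hσN⟩ := hM.exists_le_coe_sub_mem harch σ 1
  set δ : ℝ := (2 * N)⁻¹ with hδ_def
  have hδ : 0 < δ := by positivity
  have h : ((δ * N - 1 : ℝ) : A) ∈ M := by
    convert hM.add_mem (hM.add_mem hq (hM.isSumSq_mul_mem hσ (hw δ hδ))) (hM.coe_mul_mem hδ.le hσN)
      using 1
    push_cast
    linear_combination e
  have hδN : δ * N = 2⁻¹ := by rw [hδ_def]; field_simp
  linarith [hM.nonneg_of_coe_mem hM₁ h]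

theorem exists_coe_sub_mem_support (hM : IsQuadraticModule M) (harch : IsArchimedean M)
    (hM₁ : -1 ∉ M) (hsemi : ∀ a ∉ M, -a ∈ M)
    (hclosed : ∀ w, (∀ δ : ℝ, 0 < δ → w + (δ : A) ∈ M) → w ∈ M) (a : A) :
    ∃ r : ℝ, a - r ∈ hM.support := by
  set S := {r : ℝ | (r : A) - a ∈ M}
  have hbdd : BddBelow S := by
    obtain ⟨c, hc⟩ := harch (-a)
    refine ⟨-c, fun r (hr : (r : A) - a ∈ M) => ?_⟩
    have hrc : ((r + c : ℝ) : A) ∈ M := by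
      convert hM.add_mem hr hc using 1
      push_cast; ring
    linarith [hM.nonneg_of_coe_mem hM₁ hrc]
  refine ⟨sInf S, hclosed _ fun δ hδ => ?_, hclosed _ fun δ hδ => ?_⟩
  · have : ((sInf S - δ : ℝ) : A) - a ∉ M := notMem_of_lt_csInf (s := S) (by linarith) hbdd
    convert hsemi _ this using 1
    push_cast; ring
  · obtain ⟨r, hr, hlt⟩ := exists_lt_of_csInf_lt (harch a) (by linarith : sInf S < sInf S + δ)
    convert hM.coe_sub_mem_of_le hr hlt.le using 1
    push_cast; ring

theorem exists_algHom_of_forall_exists_coe_sub_mem_support (hM : IsQuadraticModule M)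
    (hM₁ : -1 ∉ M) (h : ∀ a : A, ∃ r : ℝ, a - r ∈ hM.support) :
    ∃ φ : A →ₐ[ℝ] ℝ, ∀ a ∈ M, 0 ≤ φ a := by
  have : Nontrivial (A ⧸ hM.support) :=
    Ideal.Quotient.nontrivial_iff.2 fun h => hM₁ ((hM.support.eq_top_iff_one.1 h).2)
  have hmk (a : A) (r : ℝ) (hr : a - r ∈ hM.support) :
      Ideal.Quotient.mkₐ ℝ hM.support a = algebraMap ℝ _ r := by
    rw [Ideal.Quotient.mkₐ_eq_mk, ← Ideal.Quotient.mk_algebraMap, Ideal.Quotient.eq]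
    exact hr
  have hbij : Function.Bijective (Algebra.ofId ℝ (A ⧸ hM.support)) := by
    refine ⟨(algebraMap ℝ _).injective, fun x => ?_⟩
    obtain ⟨a, rfl⟩ := Ideal.Quotient.mk_surjective x
    obtain ⟨r, hr⟩ := h a
    exact ⟨r, (hmk a r hr).symm⟩
  let e := AlgEquiv.ofBijective _ hbij
  refine ⟨e.symm.toAlgHom.comp (Ideal.Quotient.mkₐ ℝ hM.support), fun a ha => ?_⟩
  obtain ⟨r, hr⟩ := h a
  have hφ : e.symm (Ideal.Quotient.mkₐ ℝ hM.support a) = r := by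
    rw [hmk a r hr]; exact e.symm_apply_apply r
  change 0 ≤ e.symm (Ideal.Quotient.mkₐ ℝ hM.support a)
  rw [hφ]
  exact hM.nonneg_of_coe_mem hM₁ (by simpa using hM.add_mem ha hr.2)

theorem exists_algHom_of_neg_one_notMem (hM : IsQuadraticModule M) (harch : IsArchimedean M)
    (hM₁ : -1 ∉ M) : ∃ φ : A →ₐ[ℝ] ℝ, ∀ a ∈ M, 0 ≤ φ a := by
  obtain ⟨Q, hMQ, hQ, hQ₁, hmax⟩ := hM.exists_maximal hM₁
  have harchQ := harch.mono hMQ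
  have hsemi (a : A) (ha : a ∉ Q) : -a ∈ Q := by
    by_contra hna
    exact hQ₁ (hQ.neg_one_mem_of_neg_one_mem_adjoin (hmax a ha) (hmax _ hna))
  have hclosed (w : A) (hw : ∀ δ : ℝ, 0 < δ → w + (δ : A) ∈ Q) : w ∈ Q := by
    by_contra hwQ
    exact hQ.neg_one_notMem_adjoin harchQ hQ₁ hw (hmax w hwQ)
  obtain ⟨φ, hφ⟩ := hQ.exists_algHom_of_forall_exists_coe_sub_mem_support hQ₁
    (hQ.exists_coe_sub_mem_support harchQ hQ₁ hsemi hclosed)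
  exact ⟨φ, fun a ha => hφ a (hMQ ha)⟩

theorem coe_pow_sub_mem (hM : IsQuadraticModule M) {γ : ℝ} (hγ : 0 ≤ γ) {u : A}
    (hu : (γ : A) - u * u ∈ M) (n : ℕ) : ((γ ^ n : ℝ) : A) - u ^ n * u ^ n ∈ M := by
  induction n with
  | zero => simpa using hM.zero_mem
  | succ n ih =>
    convert hM.add_mem (hM.coe_mul_mem hγ ih) (hM.mul_self_mul_mem (u ^ n) hu) using 1
    push_cast; ring

theorem add_coe_mem_of_geometric (hM : IsQuadraticModule M) {u v h : A} {γ K n₁ : ℝ}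
    (hγ : 0 ≤ γ) (hγ₁ : γ ≤ 1) (hK : 0 ≤ K) (hn₁ : 0 ≤ n₁) (huv : u + v = 1)
    (hu : (γ : A) - u * u ∈ M) (hvh : v * h ∈ M) (huvh : u * (v * h) + ((K * (1 - γ) : ℝ) : A) ∈ M)
    (hh : h + (n₁ : A) ∈ M) (n : ℕ) : h + ((K + n₁ * γ ^ n : ℝ) : A) ∈ M := by
  obtain rfl := eq_sub_of_add_eq' huv
  -- `h = (u²)ⁿ h + ∑_{i<n} (u²)ⁱ (1 - u²) h` with `1 - u² = v + u v`
  have hpartial (n : ℕ) : h - u ^ n * u ^ n * h + ((K * (1 - γ ^ n) : ℝ) : A) ∈ M := by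
    induction n with
    | zero => simpa using hM.zero_mem
    | succ n ih =>
      convert hM.add_mem ih (hM.add_mem (hM.add_mem (hM.mul_self_mul_mem (u ^ n) hvh)
        (hM.mul_self_mul_mem (u ^ n) huvh))
        (hM.coe_mul_mem (mul_nonneg hK (sub_nonneg.2 hγ₁)) (hM.coe_pow_sub_mem hγ hu n))) using 1
      push_cast; ring
  have htail : u ^ n * u ^ n * h + ((n₁ * γ ^ n : ℝ) : A) ∈ M := by
    convert hM.add_mem (hM.mul_self_mul_mem (u ^ n) hh)
      (hM.coe_mul_mem hn₁ (hM.coe_pow_sub_mem hγ hu n)) using 1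
    push_cast; ring
  refine hM.add_coe_mem_of_le (c := K * (1 - γ ^ n) + n₁ * γ ^ n) ?_
    (by nlinarith [pow_nonneg hγ n])
  convert hM.add_mem (hpartial n) htail using 1
  push_cast; ring

theorem add_coe_mem_of_isSumSq_mul_eq (hM : IsQuadraticModule M) (harch : IsArchimedean M)
    {σ h q : A} (hσ : IsSumSq σ) (hq : q ∈ M) (hσh : σ * h = 1 + q) {δ : ℝ} (hδ : 0 < δ) :
    h + (δ : A) ∈ M := by
  obtain ⟨c, hc, hch⟩ := hM.exists_le_coe_sub_mem harch h 1
  obtain ⟨n₁, hn₁, hhn₁⟩ := hM.exists_le_coe_sub_mem harch (-h) 1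
  obtain ⟨D, hD, hσD⟩ := hM.exists_le_coe_sub_mem harch (σ * (1 + q)) 0
  obtain ⟨B, hB, hσB⟩ := hM.exists_le_coe_sub_mem harch σ (max c (2 * c * D / δ))
  have hBc : c ≤ B := le_of_max_le_left hB
  have hBD : 2 * c * D ≤ δ * B := by
    have := le_of_max_le_right hB
    rwa [div_le_iff₀ hδ, mul_comm B] at this
  have hB₀ : 0 < B := by linarith
  set β := (c * B)⁻¹ with hβ_def
  have hβ₀ : 0 < β := by positivity
  have hβ₁ : β ≤ 1 := inv_le_one_of_one_le₀ (by nlinarith)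
  have hβc : (β : A) * c = (B⁻¹ : ℝ) := by
    rw [← algebraMap.coe_mul, hβ_def]; congr 1; field_simp
  have hBB : ((B⁻¹ : ℝ) : A) * B = 1 := by
    rw [← algebraMap.coe_mul, inv_mul_cancel₀ hB₀.ne', algebraMap.coe_one]
  -- with `v = σ / B` and `u = 1 - v`: the lower bound `c σ - 1 ∈ M` gives `1 - β - u² ∈ M`
  have hu : ((1 - β : ℝ) : A) - (1 - (B⁻¹ : ℝ) * σ) * (1 - (B⁻¹ : ℝ) * σ) ∈ M := by
    convert hM.add_mem (hM.coe_mul_mem hβ₀.le (hM.add_mem (hM.isSumSq_mul_mem hσ hch) hq))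
      (hM.coe_mul_mem (inv_nonneg.2 hB₀.le)
        (hM.isSumSq_mul_mem hσ (hM.coe_mul_mem (inv_nonneg.2 hB₀.le) hσB))) using 1
    push_cast
    linear_combination (β : A) * hσh - σ * hβc - (B⁻¹ : ℝ) * σ * hBB
  have hvh : (B⁻¹ : ℝ) * σ * h ∈ M := by
    convert hM.coe_mul_mem (inv_nonneg.2 hB₀.le) (hM.add_mem hM.one_mem hq) using 1
    linear_combination (B⁻¹ : ℝ) * hσh
  have huvh : (1 - (B⁻¹ : ℝ) * σ) * ((B⁻¹ : ℝ) * σ * h) + ((c * D / B * (1 - (1 - β)) : ℝ) : A)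
      ∈ M := by
    have hK : c * D / B * (1 - (1 - β)) = B⁻¹ * B⁻¹ * D := by
      rw [hβ_def]; field_simp; ring
    rw [hK]
    convert hM.add_mem (hM.coe_mul_mem (inv_nonneg.2 hB₀.le) (hM.add_mem hM.one_mem hq))
      (hM.coe_mul_mem (c := B⁻¹ * B⁻¹) (by positivity) hσD) using 1
    push_cast
    linear_combination ((B⁻¹ : ℝ) - (B⁻¹ : ℝ) * (B⁻¹ : ℝ) * σ : A) * hσh
  have hhn₁' : h + (n₁ : A) ∈ M := by convert hhn₁ using 1; ring
  obtain ⟨n, hn⟩ := exists_pow_lt_of_lt_one (div_pos hδ (by linarith : 0 < 2 * n₁))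
    (by linarith : 1 - β < 1)
  refine hM.add_coe_mem_of_le (hM.add_coe_mem_of_geometric (by linarith) (by linarith)
    (by positivity) (by linarith) (sub_add_cancel 1 _) hu hvh huvh hhn₁' n) ?_
  have h₁ : c * D / B ≤ δ / 2 := by rw [div_le_iff₀ hB₀]; linarith
  have h₂ : n₁ * (1 - β) ^ n ≤ δ / 2 := by
    rw [lt_div_iff₀ (by linarith), mul_comm] at hn; linarith
  linarith

theorem exists_isSumSq_mul_eq_one_add (hM : IsQuadraticModule M) (harch : IsArchimedean M)
    {a : A} (ha : ∀ φ : A →ₐ[ℝ] ℝ, (∀ x ∈ M, 0 ≤ φ x) → 0 < φ a) :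
    ∃ σ, IsSumSq σ ∧ ∃ q ∈ M, σ * a = 1 + q := by
  by_contra h
  have h₁ : -1 ∉ QuadraticModule.adjoin M (-a) := by
    rintro ⟨q, hq, σ, hσ, e⟩
    exact h ⟨σ, hσ, q, hq, by linear_combination e⟩
  obtain ⟨φ, hφ⟩ := (hM.adjoin (-a)).exists_algHom_of_neg_one_notMem
    (harch.mono (subset_adjoin _)) h₁
  have h₂ := hφ _ (hM.mem_adjoin (-a))
  have h₃ := ha φ fun x hx => hφ x (subset_adjoin _ hx)
  rw [map_neg] at h₂
  linarith

/-- Jacobi's representation theorem. -/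

theorem mem_of_forall_algHom_pos (hM : IsQuadraticModule M) (harch : IsArchimedean M) {a : A}
    (ha : ∀ φ : A →ₐ[ℝ] ℝ, (∀ x ∈ M, 0 ≤ φ x) → 0 < φ a) : a ∈ M := by
  obtain ⟨σ, hσ, q, hq, hσa⟩ := hM.exists_isSumSq_mul_eq_one_add harch ha
  obtain ⟨B, hB, hσB⟩ := hM.exists_le_coe_sub_mem harch σ 1
  -- evaluating `σ a = 1 + q` at `φ` gives `φ a ≥ 1 / B`
  have hgap (φ : A →ₐ[ℝ] ℝ) (hφ : ∀ x ∈ M, 0 ≤ φ x) : 0 < φ (a - ((2 * B)⁻¹ : ℝ)) := by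
    have hφσB := hφ _ hσB
    have hφσ := hφ _ (hM.isSumSq_mem hσ)
    have hφq := hφ _ hq
    have hφσa := congrArg φ hσa
    simp only [map_sub, map_mul, map_add, map_one, AlgHom.commutes, Algebra.algebraMap_self,
      RingHom.id_apply] at hφσB hφσa ⊢
    have hφa : 0 < φ a := by nlinarith
    have : 1 ≤ B * φ a := by nlinarith
    rw [sub_pos, inv_lt_iff_one_lt_mul₀ (by positivity)]
    linarith
  obtain ⟨σ', hσ', q', hq', hσ'a⟩ := hM.exists_isSumSq_mul_eq_one_add harch hgap
  simpa using hM.add_coe_mem_of_isSumSq_mul_eq harch hσ' hq' hσ'a (δ := (2 * B)⁻¹) (by positivity)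

end Algebra

end IsQuadraticModule

theorem isSOS_iff_isSumSq {k : ℕ} {s : MvPolynomial (Fin k) ℝ} : IsSOS s ↔ IsSumSq s := by
  refine ⟨fun ⟨r, p, hs⟩ => hs ▸ IsSumSq.sum_sq _ _, fun hs => ?_⟩
  induction hs with
  | zero => exact ⟨0, ![], by simp⟩
  | sq_add a _ ih =>
    obtain ⟨r, p, rfl⟩ := ih
    exact ⟨r + 1, Fin.cons a p, by simp [Fin.sum_univ_succ, sq]⟩

open QuadraticModule in

/-- Putinar's Positivstellensatz. -/
theorem putinar_positivstellensatz {k m : ℕ} (g : Fin m → MvPolynomial (Fin k) ℝ)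
    (harch : ∃ (N : ℝ) (s₀ : MvPolynomial (Fin k) ℝ) (s : Fin m → MvPolynomial (Fin k) ℝ),
      IsSOS s₀ ∧ (∀ i, IsSOS (s i)) ∧
      C N - ∑ j : Fin k, X j ^ 2 = s₀ + ∑ i, s i * g i)
    (f : MvPolynomial (Fin k) ℝ)
    (hf : ∀ u : Fin k → ℝ, (∀ i, 0 ≤ eval u (g i)) → 0 < eval u f) :
    ∃ (s₀ : MvPolynomial (Fin k) ℝ) (s : Fin m → MvPolynomial (Fin k) ℝ),
      IsSOS s₀ ∧ (∀ i, IsSOS (s i)) ∧ f = s₀ + ∑ i, s i * g i := by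
  have hM := isQuadraticModule_generatedBy g
  obtain ⟨N, s₀, s, hs₀, hs, hN⟩ := harch
  have harchM : IsArchimedean (generatedBy g) := by
    refine hM.isArchimedean_of_coe_sub_sum_mul_self_mem (adjoin_range_X) (N := N)
      ⟨s₀, s, isSOS_iff_isSumSq.1 hs₀, fun i => isSOS_iff_isSumSq.1 (hs i), ?_⟩
    simpa [sq, MvPolynomial.algebraMap_eq] using hN
  obtain ⟨t₀, t, ht₀, ht, rfl⟩ : f ∈ generatedBy g := by
    refine hM.mem_of_forall_algHom_pos harchM fun φ hφ => ?_
    have hφ_eval (p : MvPolynomial (Fin k) ℝ) : φ p = eval (φ ∘ X) p := by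
      rw [← coe_aeval_eq_eval, ← aeval_unique]; rfl
    rw [hφ_eval]
    exact hf _ fun i => hφ_eval (g i) ▸ hφ _ (mem_generatedBy g i)
  exact ⟨t₀, t, isSOS_iff_isSumSq.2 ht₀, fun i => isSOS_iff_isSumSq.2 (ht i), rfl⟩
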